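/- Let ς = (2k−3) α (1−α)^{−(k−2)/(k−1)}. If ς < 1, then Φ is a contraction on Δ with respect to the 1-norm: ‖Φ(x) − Φ(y)‖_1 ≤ ς ‖x − y‖_1 for all x, y ∈ Δ. -/

import Mathlib

open Finset Real

noncomputable def contr {n m : ℕ} (P : Fin n → (Fin m → Fin n) → ℝ) (y : Fin n → ℝ) : Fin n → ℝ :=
  fun i => ∑ j : Fin m → Fin n, P i j * ∏ s, y (j s)

noncomputable def Phi {n : ℕ} (k : ℕ) (P : Fin n → (Fin (k-1) → Fin n) → ℝ) (v : Fin n → ℝ)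
    (α : ℝ) (y : Fin n → ℝ) : Fin n → ℝ :=
  fun i => (1 + α * ∑ l, contr P y l) ^ (-((k:ℝ)-2)/((k:ℝ)-1)) * (v i + α * contr P y i)

/-!
Put `u = v + α P̄ x^{k-1}` and `w = v + α P̄ y^{k-1}`. Since `eᵀv = 1`, `Φ(x) = (eᵀu)^{-β} u` with
`β = (k-2)/(k-1) ∈ [0,1]`. On `{eᵀu ≥ 1}` the normalisation `u ↦ (eᵀu)^{-β} u` is `(1+β)`-Lipschitz
in `ℓ¹`, by the concave Bernoulli inequality `t^β ≤ 1 + β (t-1)`. On the `ℓ¹`-ball of radius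
`r = (1-α)^{-1/(k-1)}` the tensor power `x ↦ x^{⊗(k-1)}` is `(k-1) r^{k-2}`-Lipschitz (peel off one
factor at a time), and `P̄` does not increase `ℓ¹` norms of tensors. The constants multiply to
`(1+β) (k-1) α r^{k-2} = (2k-3) α (1-α)^{-(k-2)/(k-1)}`.
-/

lemma abs_mul_sub_mul_le {a b c d : ℝ} (ha : 0 ≤ a) (hd : 0 ≤ d) :
    |a * b - c * d| ≤ |a - c| * d + a * |b - d| :=
  calc |a * b - c * d| = |(a - c) * d + a * (b - d)| := by ring_nf
    _ ≤ |(a - c) * d| + |a * (b - d)| := abs_add_le _ _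
    _ = |a - c| * d + a * |b - d| := by rw [abs_mul, abs_mul, abs_of_nonneg ha, abs_of_nonneg hd]

section ProductTensor

variable {ι : Type*} [Fintype ι]

lemma Fintype.sum_fin_succ_pi {M : Type*} [AddCommMonoid M] {m : ℕ} (F : (Fin (m + 1) → ι) → M) :
    ∑ j, F j = ∑ i, ∑ j : Fin m → ι, F (Fin.cons i j) := by
  rw [← Fintype.sum_prod_type']
  exact (Fintype.sum_equiv (Fin.consEquiv fun _ => ι) _ _ fun _ => rfl).symm

lemma sum_abs_prod_sub_prod_succ_le {x y : ι → ℝ} (hx : 0 ≤ x) (hy : 0 ≤ y) (m : ℕ) :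
    ∑ j : Fin (m + 1) → ι, |∏ s, x (j s) - ∏ s, y (j s)| ≤
      (∑ i, y i) ^ m * ∑ i, |x i - y i| +
        (∑ i, x i) * ∑ j : Fin m → ι, |∏ s, x (j s) - ∏ s, y (j s)| :=
  calc ∑ j : Fin (m + 1) → ι, |∏ s, x (j s) - ∏ s, y (j s)|
      = ∑ i, ∑ j : Fin m → ι, |x i * ∏ s, x (j s) - y i * ∏ s, y (j s)| := by
        simp only [Fintype.sum_fin_succ_pi, Fin.prod_univ_succ, Fin.cons_zero, Fin.cons_succ]
    _ ≤ ∑ i, ∑ j : Fin m → ι,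
          (|x i - y i| * ∏ s, y (j s) + x i * |∏ s, x (j s) - ∏ s, y (j s)|) := by
        gcongr with i _ j _
        exact abs_mul_sub_mul_le (hx i) (prod_nonneg fun s _ => hy (j s))
    _ = _ := by
        simp only [sum_add_distrib, ← mul_sum, ← sum_mul, ← Fintype.sum_pow]
        ring

lemma sum_abs_prod_sub_prod_le {x y : ι → ℝ} {r : ℝ} (hx : 0 ≤ x) (hy : 0 ≤ y)
    (hxr : ∑ i, x i ≤ r) (hyr : ∑ i, y i ≤ r) (m : ℕ) :
    ∑ j : Fin (m + 1) → ι, |∏ s, x (j s) - ∏ s, y (j s)| ≤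
      (m + 1) * r ^ m * ∑ i, |x i - y i| := by
  have hD : 0 ≤ ∑ i, |x i - y i| := sum_nonneg fun i _ => abs_nonneg _
  have hX : 0 ≤ ∑ i, x i := sum_nonneg fun i _ => hx i
  have hY : 0 ≤ ∑ i, y i := sum_nonneg fun i _ => hy i
  have hr : 0 ≤ r := hX.trans hxr
  induction m with
  | zero => simpa using sum_abs_prod_sub_prod_succ_le hx hy 0
  | succ m ih =>
    calc _ ≤ (∑ i, y i) ^ (m + 1) * ∑ i, |x i - y i| +
          (∑ i, x i) * ((m + 1) * r ^ m * ∑ i, |x i - y i|) :=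
          (sum_abs_prod_sub_prod_succ_le hx hy (m + 1)).trans (by gcongr)
      _ ≤ r ^ (m + 1) * ∑ i, |x i - y i| + r * ((m + 1) * r ^ m * ∑ i, |x i - y i|) := by
          gcongr
      _ = _ := by push_cast; ring

end ProductTensor

lemma contr_nonneg {n m : ℕ} {P : Fin n → (Fin m → Fin n) → ℝ} (hP : ∀ i j, 0 ≤ P i j)
    {y : Fin n → ℝ} (hy : 0 ≤ y) : 0 ≤ contr P y := by
  intro i
  exact sum_nonneg fun j _ => mul_nonneg (hP i j) (prod_nonneg fun s _ => hy (j s))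

lemma sum_abs_contr_sub_le {n m : ℕ} {P : Fin n → (Fin m → Fin n) → ℝ}
    (hP0 : ∀ i j, 0 ≤ P i j) (hPs : ∀ j, ∑ i, P i j ≤ 1) (x y : Fin n → ℝ) :
    ∑ i, |contr P x i - contr P y i| ≤ ∑ j : Fin m → Fin n, |∏ s, x (j s) - ∏ s, y (j s)| :=
  calc ∑ i, |contr P x i - contr P y i|
      = ∑ i, |∑ j, P i j * (∏ s, x (j s) - ∏ s, y (j s))| := by
        simp only [contr, mul_sub, sum_sub_distrib]
    _ ≤ ∑ i, ∑ j, P i j * |∏ s, x (j s) - ∏ s, y (j s)| := by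
        refine sum_le_sum fun i _ => (abs_sum_le_sum_abs _ _).trans_eq (sum_congr rfl fun j _ => ?_)
        rw [abs_mul, abs_of_nonneg (hP0 i j)]
    _ = ∑ j, (∑ i, P i j) * |∏ s, x (j s) - ∏ s, y (j s)| := by
        rw [sum_comm]
        simp only [sum_mul]
    _ ≤ ∑ j, |∏ s, x (j s) - ∏ s, y (j s)| :=
        sum_le_sum fun j _ => mul_le_of_le_one_left (abs_nonneg _) (hPs j)

lemma one_sub_rpow_neg_le {t β : ℝ} (ht : 1 ≤ t) (hβ0 : 0 ≤ β) (hβ1 : β ≤ 1) :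
    1 - t ^ (-β) ≤ β * (t - 1) := by
  have hu : 1 ≤ t ^ β := one_le_rpow ht hβ0
  have hbern : t ^ β ≤ 1 + β * (t - 1) := by
    simpa using rpow_one_add_le_one_add_mul_self (s := t - 1) (by linarith) hβ0 hβ1
  have hinv : 1 - (t ^ β)⁻¹ ≤ t ^ β - 1 := by
    have hu0 : 0 < t ^ β := by linarith
    nlinarith [mul_inv_cancel₀ hu0.ne', mul_nonneg (sq_nonneg (t ^ β - 1)) (inv_pos.2 hu0).le]
  rw [rpow_neg (by linarith)]
  linarith

lemma rpow_neg_sub_rpow_neg_mul_le {a b β : ℝ} (ha : 1 ≤ a) (hab : a ≤ b) (hβ0 : 0 ≤ β)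
    (hβ1 : β ≤ 1) : (a ^ (-β) - b ^ (-β)) * a ≤ β * (b - a) := by
  have ha0 : 0 < a := by linarith
  have hA1 : a ^ (-β) ≤ 1 := rpow_le_one_of_one_le_of_nonpos ha (by linarith)
  have hb : b ^ (-β) = a ^ (-β) * (b / a) ^ (-β) := by
    rw [← mul_rpow ha0.le (div_nonneg (by linarith) ha0.le), mul_div_cancel₀ _ ha0.ne']
  calc (a ^ (-β) - b ^ (-β)) * a = a ^ (-β) * ((1 - (b / a) ^ (-β)) * a) := by rw [hb]; ring
    _ ≤ a ^ (-β) * (β * (b / a - 1) * a) := by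
        gcongr
        exact one_sub_rpow_neg_le ((one_le_div ha0).2 hab) hβ0 hβ1
    _ = a ^ (-β) * (β * (b - a)) := by field_simp
    _ ≤ β * (b - a) := mul_le_of_le_one_left (by nlinarith) hA1

lemma sum_abs_rpow_neg_sum_mul_sub_le {ι : Type*} [Fintype ι] {u w : ι → ℝ} {β : ℝ}
    (hu : 0 ≤ u) (hw : 0 ≤ w) (hu1 : 1 ≤ ∑ i, u i) (hw1 : 1 ≤ ∑ i, w i)
    (hβ0 : 0 ≤ β) (hβ1 : β ≤ 1) :
    ∑ i, |(∑ l, u l) ^ (-β) * u i - (∑ l, w l) ^ (-β) * w i| ≤ (1 + β) * ∑ i, |u i - w i| := by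
  wlog hab : ∑ i, u i ≤ ∑ i, w i generalizing u w
  · simpa only [abs_sub_comm] using this hw hu hw1 hu1 (le_of_not_ge hab)
  set a := ∑ i, u i
  set b := ∑ i, w i
  set D := ∑ i, |u i - w i|
  have hD : 0 ≤ D := sum_nonneg fun i _ => abs_nonneg _
  have hBA : b ^ (-β) ≤ a ^ (-β) := rpow_le_rpow_of_nonpos (by linarith) hab (by linarith)
  have hB1 : b ^ (-β) ≤ 1 := rpow_le_one_of_one_le_of_nonpos hw1 (by linarith)
  have hba : b - a ≤ D :=
    calc b - a = ∑ i, (w i - u i) := (sum_sub_distrib ..).symm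
      _ ≤ D := sum_le_sum fun i _ => abs_sub_comm (u i) (w i) ▸ le_abs_self _
  calc ∑ i, |a ^ (-β) * u i - b ^ (-β) * w i|
      ≤ ∑ i, (|u i - w i| * b ^ (-β) + u i * (a ^ (-β) - b ^ (-β))) := by
        refine sum_le_sum fun i _ => ?_
        rw [mul_comm _ (u i), mul_comm _ (w i), ← abs_of_nonneg (sub_nonneg.2 hBA)]
        exact abs_mul_sub_mul_le (hu i) (rpow_nonneg (by linarith) _)
    _ = D * b ^ (-β) + a * (a ^ (-β) - b ^ (-β)) := by
        rw [sum_add_distrib, ← sum_mul, ← sum_mul]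
    _ ≤ D + β * (b - a) := by
        rw [mul_comm a]
        exact add_le_add (mul_le_of_le_one_right hD hB1)
          (rpow_neg_sub_rpow_neg_mul_le hu1 hab hβ0 hβ1)
    _ ≤ (1 + β) * D := by nlinarith

lemma Phi_eq_rpow_neg_sum_mul {n k : ℕ} (P : Fin n → (Fin (k - 1) → Fin n) → ℝ)
    {v : Fin n → ℝ} (hv1 : ∑ i, v i = 1) (α : ℝ) (y : Fin n → ℝ) (i : Fin n) :
    Phi k P v α y i = (∑ l, (v l + α * contr P y l)) ^ (-((k:ℝ)-2)/((k:ℝ)-1)) *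
      (v i + α * contr P y i) := by
  rw [sum_add_distrib, hv1, ← mul_sum, Phi]

theorem Phi_contraction_general (n k : ℕ) (hk : 2 ≤ k)
    (P : Fin n → (Fin (k-1) → Fin n) → ℝ)
    (hP0 : ∀ i j, 0 ≤ P i j) (hPs : ∀ j, ∑ i, P i j ≤ 1)
    (v : Fin n → ℝ) (hv0 : ∀ i, 0 ≤ v i) (hv1 : ∑ i, v i = 1)
    (α : ℝ) (hα0 : 0 ≤ α) (hα1 : α < 1)
    (x y : Fin n → ℝ) (hx : ∀ i, 0 ≤ x i) (hy : ∀ i, 0 ≤ y i)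
    (hxΔ : ∑ i, x i ≤ (1 - α) ^ (-(1:ℝ)/((k:ℝ)-1))) (hyΔ : ∑ i, y i ≤ (1 - α) ^ (-(1:ℝ)/((k:ℝ)-1))) :
    ∑ i, |Phi k P v α x i - Phi k P v α y i| ≤
      ((2*(k:ℝ)-3) * α * (1 - α) ^ (-((k:ℝ)-2)/((k:ℝ)-1))) * ∑ i, |x i - y i| := by
  obtain ⟨K, rfl⟩ : ∃ K, k = K + 2 := ⟨k - 2, by omega⟩
  have hK : ((K + 2 : ℕ) : ℝ) = K + 2 := by push_cast; ring
  set β : ℝ := K / (K + 1)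
  have hβ : -(((K + 2 : ℕ) : ℝ) - 2) / (((K + 2 : ℕ) : ℝ) - 1) = -β := by rw [hK]; ring
  have hradius : ((1 - α) ^ (-(1:ℝ) / (((K + 2 : ℕ) : ℝ) - 1))) ^ K = (1 - α) ^ (-β) := by
    rw [← rpow_natCast, ← rpow_mul (by linarith), hK]
    congr 1
    ring
  have hu : ∀ z : Fin n → ℝ, 0 ≤ z → 0 ≤ fun i => v i + α * contr P z i := fun z hz i =>
    add_nonneg (hv0 i) (mul_nonneg hα0 (contr_nonneg hP0 hz i))
  have hu1 : ∀ z : Fin n → ℝ, 0 ≤ z → 1 ≤ ∑ i, (v i + α * contr P z i) := fun z hz => by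
    rw [sum_add_distrib, hv1, ← mul_sum]
    have := sum_nonneg fun i (_ : i ∈ univ) => contr_nonneg hP0 hz i
    nlinarith
  simp only [Phi_eq_rpow_neg_sum_mul P hv1, hβ]
  calc _ ≤ (1 + β) * ∑ i, |(v i + α * contr P x i) - (v i + α * contr P y i)| :=
        sum_abs_rpow_neg_sum_mul_sub_le (hu x hx) (hu y hy) (hu1 x hx) (hu1 y hy)
          (by positivity) (div_le_one_of_le₀ (by linarith) (by positivity))
    _ = (1 + β) * α * ∑ i, |contr P x i - contr P y i| := by
        simp only [add_sub_add_left_eq_sub, ← mul_sub, abs_mul, abs_of_nonneg hα0, ← mul_sum]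
        ring
    _ ≤ (1 + β) * α * ((K + 1) * ((1 - α) ^ (-(1:ℝ) / (((K + 2 : ℕ) : ℝ) - 1))) ^ K *
          ∑ i, |x i - y i|) := by
        gcongr
        exact (sum_abs_contr_sub_le hP0 hPs x y).trans (sum_abs_prod_sub_prod_le hx hy hxΔ hyΔ K)
    _ = _ := by
        rw [hradius, hK]
        simp only [β]
        field_simp
        ring

theorem Phi_contraction (n k : ℕ) (hn : 0 < n) (hk : 2 ≤ k)
    (P : Fin n → (Fin (k-1) → Fin n) → ℝ)
    (hP0 : ∀ i j, 0 ≤ P i j) (hPs : ∀ j, ∑ i, P i j ≤ 1)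
    (v : Fin n → ℝ) (hv0 : ∀ i, 0 ≤ v i) (hv1 : ∑ i, v i = 1)
    (α : ℝ) (hα0 : 0 ≤ α) (hα1 : α < 1)
    (hς : (2*(k:ℝ)-3) * α * (1 - α) ^ (-((k:ℝ)-2)/((k:ℝ)-1)) < 1)
    (x y : Fin n → ℝ) (hx : ∀ i, 0 ≤ x i) (hy : ∀ i, 0 ≤ y i)
    (hxΔ : ∑ i, x i ≤ (1 - α) ^ (-(1:ℝ)/((k:ℝ)-1))) (hyΔ : ∑ i, y i ≤ (1 - α) ^ (-(1:ℝ)/((k:ℝ)-1))) :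
    ∑ i, |Phi k P v α x i - Phi k P v α y i| ≤
      ((2*(k:ℝ)-3) * α * (1 - α) ^ (-((k:ℝ)-2)/((k:ℝ)-1))) * ∑ i, |x i - y i| :=
  Phi_contraction_general n k hk P hP0 hPs v hv0 hv1 α hα0 hα1 x y hx hy hxΔ hyΔ
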